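/- Let n ≥ 1, let W be a topological space, and let b_1, …, b_n : W → M_n(ℂ) be continuous maps such that for every s ∈ W the matrices b_1(s), …, b_n(s) are nonzero self-adjoint idempotents (orthogonal projections) with b_i(s) b_j(s) = 0 whenever i ≠ j. Suppose ζ_1, …, ζ_n ∈ ℂⁿ are vectors such that b_i(s) ζ_i ≠ 0 for all 1 ≤ i ≤ n and all s ∈ W. Then there exists a continuous map U : W → U(n) into the unitary group of M_n(ℂ) such that U(s)* b_i(s) U(s) = E_{ii} for all s ∈ W and all 1 ≤ i ≤ n, where E_{ii} denotes the matrix unit with entry 1 in position (i, i) and 0 elsewhere; explicitly, one may take U(s) to be the matrix whose j-th column is b_j(s) ζ_j / ‖b_j(s) ζ_j‖. -/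

import Mathlib

open scoped Matrix

noncomputable section

/-- The Euclidean (ℓ²) norm of a vector in `ℂⁿ`. -/
def vecNorm {n : ℕ} (v : Fin n → ℂ) : ℝ := ‖(WithLp.equiv 2 (Fin n → ℂ)).symm v‖

/-!
Since `bⱼ(s)` is idempotent, `uⱼ(s) = bⱼ(s) ζⱼ / ‖bⱼ(s) ζⱼ‖` is a unit vector fixed by `bⱼ(s)`,
and orthogonality of the projections makes every `bᵢ(s)` with `i ≠ j` kill it. Self-adjointness
turns this into pairwise orthogonality of the `uⱼ(s)`, so the matrix `U(s)` with columns `uⱼ(s)`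
is unitary, and `bᵢ(s) U(s) = U(s) Eᵢᵢ` gives `U(s)* bᵢ(s) U(s) = Eᵢᵢ`. Continuity follows from
that of the `bⱼ` and of the norm, which never vanishes on `bⱼ(s) ζⱼ`.
-/

namespace Matrix

variable {ι m o R : Type*}

theorem mul_transpose_of [NonUnitalNonAssocSemiring R] [Fintype m] (M : Matrix o m R)
    (u : ι → m → R) : M * (of u)ᵀ = (of fun j => M *ᵥ u j)ᵀ :=
  rfl

theorem mulVec_eq_ite_of_mulVec_eq_self [NonUnitalSemiring R] [Fintype m] [DecidableEq ι]
    {b : ι → Matrix m m R} (horth : ∀ i j, i ≠ j → b i * b j = 0) {j : ι} {x : m → R}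
    (hx : b j *ᵥ x = x) (i : ι) : b i *ᵥ x = if i = j then x else 0 := by
  split_ifs with hij
  · rwa [hij]
  · rw [← hx, mulVec_mulVec, horth i j hij, zero_mulVec]

section StarRing

variable [NonUnitalSemiring R] [StarRing R] [Fintype m]

theorem star_dotProduct_eq_zero_of_isHermitian {P : Matrix m m R} (hP : P.IsHermitian)
    {x y : m → R} (hx : P *ᵥ x = x) (hy : P *ᵥ y = 0) : star x ⬝ᵥ y = 0 := by
  rw [← hx, star_mulVec, ← dotProduct_mulVec, hP.eq, hy, dotProduct_zero]

theorem star_dotProduct_eq_zero_of_mulVec_eq_self {b : ι → Matrix m m R}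
    (hsa : ∀ i, (b i).IsHermitian) (horth : ∀ i j, i ≠ j → b i * b j = 0) {k l : ι} (hkl : k ≠ l)
    {x y : m → R} (hx : b k *ᵥ x = x) (hy : b l *ᵥ y = y) : star x ⬝ᵥ y = 0 := by
  classical
  refine star_dotProduct_eq_zero_of_isHermitian (hsa k) hx ?_
  simpa [hkl] using mulVec_eq_ite_of_mulVec_eq_self horth hy k

end StarRing

section Unitary

variable [CommRing R] [StarRing R] [Fintype ι] [DecidableEq ι] {u : ι → ι → R}

theorem transpose_of_mem_unitaryGroup
    (hu : ∀ k l, star (u k) ⬝ᵥ u l = if k = l then 1 else 0) : (of u)ᵀ ∈ unitaryGroup ι R := by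
  rw [mem_unitaryGroup_iff']
  ext k l
  exact (hu k l).trans one_apply.symm

theorem star_mul_mul_transpose_of_eq_single
    (hu : ∀ k l, star (u k) ⬝ᵥ u l = if k = l then 1 else 0) {M : Matrix ι ι R} {i : ι}
    (hM : ∀ j, M *ᵥ u j = if i = j then u j else 0) :
    star (of u)ᵀ * M * (of u)ᵀ = single i i 1 := by
  have hMU : M * (of u)ᵀ = (of u)ᵀ * single i i 1 := by
    ext p l
    rw [mul_transpose_of, transpose_apply, of_apply, hM]
    by_cases hil : i = l
    · subst hil
      simp
    · simp [hil, Ne.symm hil]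
  rw [mul_assoc, hMU, ← mul_assoc, mem_unitaryGroup_iff'.mp (transpose_of_mem_unitaryGroup hu),
    one_mul]

end Unitary

end Matrix

open Matrix

theorem continuous_vecNorm {n : ℕ} : Continuous (vecNorm : (Fin n → ℂ) → ℝ) :=
  (PiLp.continuous_toLp 2 _).norm

theorem vecNorm_pos {n : ℕ} {v : Fin n → ℂ} (hv : v ≠ 0) : 0 < vecNorm v :=
  norm_pos_iff.mpr fun h => hv (by simpa using congrArg WithLp.ofLp h)

theorem star_dotProduct_self_eq_vecNorm_sq {n : ℕ} (v : Fin n → ℂ) :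
    star v ⬝ᵥ v = (vecNorm v : ℂ) ^ 2 := by
  have h := inner_self_eq_norm_sq_to_K (𝕜 := ℂ) (WithLp.toLp 2 v : EuclideanSpace ℂ (Fin n))
  rw [EuclideanSpace.inner_eq_star_dotProduct] at h
  exact (dotProduct_comm _ _).trans h

theorem star_dotProduct_self_inv_vecNorm_smul {n : ℕ} {v : Fin n → ℂ} (hv : v ≠ 0) :
    star ((vecNorm v : ℂ)⁻¹ • v) ⬝ᵥ ((vecNorm v : ℂ)⁻¹ • v) = 1 := by
  have hN : (vecNorm v : ℂ) ≠ 0 := Complex.ofReal_ne_zero.mpr (vecNorm_pos hv).ne'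
  rw [star_smul, smul_dotProduct, dotProduct_smul, star_dotProduct_self_eq_vecNorm_sq, smul_eq_mul,
    smul_eq_mul, Complex.star_def, map_inv₀, Complex.conj_ofReal]
  field_simp

theorem Continuous.inv_vecNorm_smul {X : Type*} [TopologicalSpace X] {n : ℕ}
    {f : X → Fin n → ℂ} (hf : Continuous f) (h0 : ∀ x, f x ≠ 0) :
    Continuous fun x => (vecNorm (f x) : ℂ)⁻¹ • f x :=
  ((Complex.continuous_ofReal.comp (continuous_vecNorm.comp hf)).inv₀ fun x =>
    Complex.ofReal_ne_zero.mpr (vecNorm_pos (h0 x)).ne').smul hf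

theorem exists_continuous_unitary_diagonalizing_projections_general
    (n : ℕ) (W : Type*) [TopologicalSpace W]
    (b : Fin n → W → Matrix (Fin n) (Fin n) ℂ)
    (hbcont : ∀ i, Continuous (b i))
    (hbsa : ∀ i s, (b i s)ᴴ = b i s)
    (hbidem : ∀ i s, b i s * b i s = b i s)
    (hborth : ∀ i j, i ≠ j → ∀ s, b i s * b j s = 0)
    (ζ : Fin n → (Fin n → ℂ))
    (hζ : ∀ i s, (b i s).mulVec (ζ i) ≠ 0) :
    ∃ U : W → Matrix (Fin n) (Fin n) ℂ,
      Continuous U ∧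
      (∀ s, U s ∈ Matrix.unitaryGroup (Fin n) ℂ) ∧
      (∀ s i, star (U s) * b i s * U s = (Matrix.single i i 1 :
        Matrix (Fin n) (Fin n) ℂ)) ∧
      (∀ s j i, U s i j = ((vecNorm ((b j s).mulVec (ζ j)) : ℂ))⁻¹ *
        (b j s).mulVec (ζ j) i) := by
  set u : W → Fin n → Fin n → ℂ := fun s j => (vecNorm (b j s *ᵥ ζ j) : ℂ)⁻¹ • (b j s *ᵥ ζ j)
  have hfix : ∀ s j, b j s *ᵥ u s j = u s j := fun s j => by
    rw [mulVec_smul, mulVec_mulVec, hbidem]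
  have horth : ∀ s, ∀ i j, i ≠ j → b i s * b j s = 0 := fun s i j hij => hborth i j hij s
  have horthonormal : ∀ s k l, star (u s k) ⬝ᵥ u s l = if k = l then 1 else 0 := by
    intro s k l
    split_ifs with hkl
    · subst hkl
      exact star_dotProduct_self_inv_vecNorm_smul (hζ k s)
    · exact star_dotProduct_eq_zero_of_mulVec_eq_self (fun i => hbsa i s) (horth s) hkl
        (hfix s k) (hfix s l)
  refine ⟨fun s => (of (u s))ᵀ, ?_, fun s => transpose_of_mem_unitaryGroup (horthonormal s),
    fun s i => star_mul_mul_transpose_of_eq_single (horthonormal s)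
      (fun j => mulVec_eq_ite_of_mulVec_eq_self (horth s) (hfix s j) i), fun _ _ _ => rfl⟩
  exact Continuous.matrix_transpose (continuous_pi fun j =>
    ((hbcont j).matrix_mulVec continuous_const).inv_vecNorm_smul (hζ j))

/-- Let `n ≥ 1`, `W` a topological space, and `b₁, …, bₙ : W → Mₙ(ℂ)`
continuous maps such that for every `s ∈ W` the matrices `b₁(s), …, bₙ(s)` are nonzero pairwise
orthogonal (self-adjoint idempotent) projections. If `ζ₁, …, ζₙ ∈ ℂⁿ` satisfy `bᵢ(s) ζᵢ ≠ 0`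
for all `i` and `s`, then there is a continuous map `U : W → U(n)` with
`U(s)* bᵢ(s) U(s) = Eᵢᵢ` for all `s, i`; explicitly, the `j`-th column of `U(s)` is
`bⱼ(s) ζⱼ / ‖bⱼ(s) ζⱼ‖`. -/
theorem exists_continuous_unitary_diagonalizing_projections
    (n : ℕ) (hn : 1 ≤ n) (W : Type*) [TopologicalSpace W]
    (b : Fin n → W → Matrix (Fin n) (Fin n) ℂ)
    (hbcont : ∀ i, Continuous (b i))
    (hbsa : ∀ i s, (b i s)ᴴ = b i s)
    (hbidem : ∀ i s, b i s * b i s = b i s)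
    (hbne : ∀ i s, b i s ≠ 0)
    (hborth : ∀ i j, i ≠ j → ∀ s, b i s * b j s = 0)
    (ζ : Fin n → (Fin n → ℂ))
    (hζ : ∀ i s, (b i s).mulVec (ζ i) ≠ 0) :
    ∃ U : W → Matrix (Fin n) (Fin n) ℂ,
      Continuous U ∧
      (∀ s, U s ∈ Matrix.unitaryGroup (Fin n) ℂ) ∧
      (∀ s i, star (U s) * b i s * U s = (Matrix.single i i 1 :
        Matrix (Fin n) (Fin n) ℂ)) ∧
      (∀ s j i, U s i j = ((vecNorm ((b j s).mulVec (ζ j)) : ℂ))⁻¹ *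
        (b j s).mulVec (ζ j) i) :=
  exists_continuous_unitary_diagonalizing_projections_general n W b hbcont hbsa hbidem hborth ζ hζ

end
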